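/- Let T be a regular tree in which every vertex has uncountably many neighbours, and let G = Aut⁺(T) be the subgroup of Aut(T) generated by the fixators of edges, with the topology of pointwise convergence on vertices. Then every continuous homomorphism from G to a metrisable topological group is trivial, while G has unbounded orbits for its isometric action on the vertex set of T. -/

import Mathlib

/-!
Continuity of `φ` at the identity, with a first-countable T₁ target, puts the fixator of some
countable set `S` of vertices into `ker φ`. An automorphism fixing an edge `wu` is the product of
two automorphisms, each supported on one of the two half-trees cut out by that edge, i.e. on
the branch through `u` at `w` (or vice versa). Since `w` has uncountably many neighbours, some
branch `x` at `w` misses `S`; regularity of the tree yields an automorphism exchanging the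
branches through `u` and `x` and fixing a third edge at `w`. Conjugating by it moves the
support into the branch `x`, so into the fixator of `S`, and normality of `ker φ` finishes.
The same branch exchange at a vertex `r` with `d(v, r) = n + 1` moves `v` to distance
`2 (n + 1)`.
-/

/-- The subgroup `Aut⁺(T)` of the permutation group of the vertices of a graph
`T`: the subgroup generated by the graph automorphisms fixing (the endpoints
of) some edge. -/
def AutPlus {V : Type*} (T : SimpleGraph V) : Subgroup (Equiv.Perm V) :=
  Subgroup.closure {σ : Equiv.Perm V |
    (∀ u v : V, T.Adj (σ u) (σ v) ↔ T.Adj u v) ∧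
    ∃ u v : V, T.Adj u v ∧ σ u = u ∧ σ v = v}

open Topology Filter

theorem Topology.IsInducing.exists_finite_eqOn_imp_mem {X ι W : Type*} [TopologicalSpace X]
    [TopologicalSpace W] {f : X → ι → W} (hf : IsInducing f) {x₀ : X} {U : Set X}
    (hU : U ∈ 𝓝 x₀) : ∃ I : Set ι, I.Finite ∧ ∀ x, Set.EqOn (f x) (f x₀) I → x ∈ U := by
  rw [hf.nhds_eq_comap, nhds_pi, mem_comap] at hU
  obtain ⟨t, ht, htU⟩ := hU
  obtain ⟨I, hI, s, hs, hIs⟩ := mem_pi.1 ht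
  refine ⟨I, hI, fun x hx => htU (hIs fun i hi => ?_)⟩
  rw [hx hi]
  exact mem_of_mem_nhds (hs i)

theorem Topology.IsInducing.exists_countable_eqOn_imp_eq {X ι W Y : Type*} [TopologicalSpace X]
    [TopologicalSpace W] [TopologicalSpace Y] [FirstCountableTopology Y] [T1Space Y]
    {f : X → ι → W} (hf : IsInducing f) {φ : X → Y} {x₀ : X} (hφ : ContinuousAt φ x₀) :
    ∃ S : Set ι, S.Countable ∧ ∀ x, Set.EqOn (f x) (f x₀) S → φ x = φ x₀ := by
  obtain ⟨U, hU⟩ := (𝓝 (φ x₀)).exists_antitone_basis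
  choose I hI hIU using fun n => hf.exists_finite_eqOn_imp_mem (hφ (hU.mem n))
  refine ⟨⋃ n, I n, Set.countable_iUnion fun n => (hI n).countable, fun x hx => ?_⟩
  have hxU : φ x ∈ ⋂ n, U n :=
    Set.mem_iInter.2 fun n => hIU n x (hx.mono (Set.subset_iUnion _ n))
  have hU₁ := biInter_basis_nhds hU.toHasBasis
  simp only [Set.iInter_true] at hU₁
  rwa [hU₁] at hxU

namespace SimpleGraph

variable {V : Type*} {T : SimpleGraph V} {w u v x y a b p q : V} {σ : Equiv.Perm V}

theorem Connected.exists_adj_dist_add_one_eq (hc : T.Connected) (hv : v ≠ w) :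
    ∃ p, T.Adj v p ∧ T.dist w p + 1 = T.dist w v := by
  obtain ⟨q, hq⟩ := hc.exists_walk_length_eq_dist v w
  cases q with
  | nil => exact absurd rfl hv
  | @cons _ p _ hadj q =>
    refine ⟨p, hadj, ?_⟩
    have h₁ := dist_le q
    have h₂ := hc.dist_triangle (u := v) (v := p) (w := w)
    rw [Walk.length_cons] at hq
    rw [dist_eq_one_iff_adj.2 hadj] at h₂
    rw [dist_comm, dist_comm (u := w)]
    omega

open Classical in
noncomputable def parent (T : SimpleGraph V) (w v : V) : V :=
  if h : ∃ p, T.Adj v p ∧ T.dist w p + 1 = T.dist w v then h.choose else v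

theorem Connected.adj_parent (hc : T.Connected) (hv : v ≠ w) : T.Adj v (T.parent w v) := by
  have h := hc.exists_adj_dist_add_one_eq hv
  rw [parent, dif_pos h]
  exact h.choose_spec.1

theorem Connected.dist_parent_add_one (hc : T.Connected) (hv : v ≠ w) :
    T.dist w (T.parent w v) + 1 = T.dist w v := by
  have h := hc.exists_adj_dist_add_one_eq hv
  rw [parent, dif_pos h]
  exact h.choose_spec.2

@[simp]
theorem parent_self : T.parent w w = w := by
  simp [parent]

theorem IsTree.parent_eq_of_adj (hT : T.IsTree) (hadj : T.Adj v p)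
    (hd : T.dist w p + 1 = T.dist w v) : T.parent w v = p := by
  have hv : v ≠ w := by rintro rfl; simp at hd
  have hc := hT.connected
  -- both `v - parent - ... - w` and `v - p - ... - w` are geodesics, hence the unique path
  have key : ∀ p', T.Adj v p' → T.dist w p' + 1 = T.dist w v →
      ∃ q : T.Path v w, (q : T.Walk v w).snd = p' := by
    intro p' hadj' hd'
    obtain ⟨q, hq⟩ := hc.exists_walk_length_eq_dist p' w
    refine ⟨⟨q.cons hadj', Walk.isPath_of_length_eq_dist _ ?_⟩, Walk.snd_cons _ _⟩
    rw [Walk.length_cons, hq, dist_comm, hd', dist_comm]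
  obtain ⟨q, hq⟩ := key p hadj hd
  obtain ⟨q', hq'⟩ := key _ (hc.adj_parent hv) (hc.dist_parent_add_one hv)
  rw [← hq, ← hq', (hT.isAcyclic.subsingleton_path v w).elim q q']

theorem IsTree.parent_eq_or_parent_eq_of_adj (hT : T.IsTree) (hadj : T.Adj a b) :
    T.parent w a = b ∨ T.parent w b = a := by
  rcases hT.dist_eq_dist_add_one_of_adj w hadj with h | h
  · exact .inl (hT.parent_eq_of_adj hadj h.symm)
  · exact .inr (hT.parent_eq_of_adj hadj.symm h.symm)

theorem IsTree.parent_eq_of_adj_of_ne_parent (hT : T.IsTree) (hadj : T.Adj a b)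
    (hb : b ≠ T.parent w a) : T.parent w b = a ∧ T.dist w b = T.dist w a + 1 := by
  rcases hT.dist_eq_dist_add_one_of_adj w hadj with h | h
  · exact absurd (hT.parent_eq_of_adj hadj h.symm).symm hb
  · exact ⟨hT.parent_eq_of_adj hadj.symm h.symm, h⟩

theorem Connected.dist_parent (hc : T.Connected) : T.dist w (T.parent w v) = T.dist w v - 1 := by
  rcases eq_or_ne v w with rfl | hv
  · simp
  · have := hc.dist_parent_add_one hv
    omega

theorem Connected.dist_parent_le_one (hc : T.Connected) : T.dist v (T.parent w v) ≤ 1 := by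
  rcases eq_or_ne v w with rfl | hv
  · simp
  · exact (dist_eq_one_iff_adj.2 (hc.adj_parent hv)).le

theorem Connected.dist_parent_iterate (hc : T.Connected) (k : ℕ) :
    T.dist w ((T.parent w)^[k] v) = T.dist w v - k ∧ T.dist v ((T.parent w)^[k] v) ≤ k := by
  induction k with
  | zero => simp
  | succ k ih =>
    rw [Function.iterate_succ_apply', hc.dist_parent, ih.1]
    refine ⟨by omega, (hc.dist_triangle (v := (T.parent w)^[k] v)).trans ?_⟩
    have := hc.dist_parent_le_one (w := w) (v := (T.parent w)^[k] v)
    omega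

/-- The branches at `w` (the components of `T - w`) are labelled by the neighbours of `w`:
`T.branch w v` is the neighbour of `w` on the geodesic from `v`, and `T.branch w w = w`. -/
noncomputable def branch (T : SimpleGraph V) (w v : V) : V :=
  (T.parent w)^[T.dist w v - 1] v

@[simp]
theorem branch_self : T.branch w w = w := by
  simp [branch]

theorem branch_of_adj (h : T.Adj w v) : T.branch w v = v := by
  simp [branch, dist_eq_one_iff_adj.2 h]

theorem Connected.dist_branch_le_one (hc : T.Connected) : T.dist w (T.branch w v) ≤ 1 := by
  rw [branch, (hc.dist_parent_iterate _).1]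
  omega

theorem Connected.adj_branch (hc : T.Connected) (hv : v ≠ w) : T.Adj w (T.branch w v) := by
  rw [← dist_eq_one_iff_adj, branch, (hc.dist_parent_iterate _).1]
  have := hc.pos_dist_of_ne hv.symm
  omega

theorem Connected.dist_branch_lt (hc : T.Connected) (hv : v ≠ w) :
    T.dist v (T.branch w v) < T.dist w v := by
  have := hc.pos_dist_of_ne hv.symm
  have := (hc.dist_parent_iterate (w := w) (v := v) (T.dist w v - 1)).2
  rw [branch]
  omega

theorem Connected.branch_parent (hc : T.Connected) (h : 2 ≤ T.dist w v) :
    T.branch w (T.parent w v) = T.branch w v := by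
  rw [branch, branch, hc.dist_parent, ← Function.iterate_succ_apply]
  congr 1
  omega

theorem IsTree.branch_eq_of_adj (hT : T.IsTree) (hadj : T.Adj a b) (ha : a ≠ w) (hb : b ≠ w) :
    T.branch w a = T.branch w b := by
  wlog h : T.parent w a = b generalizing a b
  · exact (this hadj.symm hb ha ((hT.parent_eq_or_parent_eq_of_adj hadj).resolve_left h)).symm
  have hc := hT.connected
  have h₁ := hc.dist_parent_add_one ha
  have h₂ := hc.pos_dist_of_ne hb.symm
  rw [h] at h₁
  rw [← h, hc.branch_parent (by omega)]

theorem IsTree.root_mem_support_of_branch_ne (hT : T.IsTree) (q : T.Walk a b)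
    (h : T.branch w a ≠ T.branch w b) : w ∈ q.support := by
  induction q with
  | nil => exact absurd rfl h
  | @cons a c b hadj q ih =>
    rw [Walk.support_cons, List.mem_cons]
    by_cases ha : a = w
    · exact .inl ha.symm
    by_cases hc : c = w
    · exact .inr (hc ▸ q.start_mem_support)
    exact .inr (ih (hT.branch_eq_of_adj hadj ha hc ▸ h))

theorem IsTree.dist_add_dist_le_of_branch_ne (hT : T.IsTree) (h : T.branch w a ≠ T.branch w b) :
    T.dist a w + T.dist w b ≤ T.dist a b := by
  classical
  obtain ⟨q, hq⟩ := hT.connected.exists_walk_length_eq_dist a b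
  have hw := hT.root_mem_support_of_branch_ne q h
  rw [← hq, ← q.take_spec hw, Walk.length_append]
  exact add_le_add (dist_le _) (dist_le _)

theorem IsTree.dist_lt_dist_iff_branch_eq (hT : T.IsTree) (hwu : T.Adj w u) :
    T.dist u v < T.dist w v ↔ T.branch w v = u := by
  have hc := hT.connected
  constructor
  · intro h
    by_contra hb
    rw [← branch_of_adj hwu] at hb
    have h₁ := hT.dist_add_dist_le_of_branch_ne hb
    have h₂ := hc.dist_triangle (u := u) (v := w) (w := v)
    rw [dist_comm, dist_eq_one_iff_adj.2 hwu] at h₁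
    rw [dist_comm, dist_eq_one_iff_adj.2 hwu.symm] at h₂
    rw [dist_comm] at h
    omega
  · rintro rfl
    have hv : v ≠ w := by rintro rfl; simp at hwu
    have := hc.dist_branch_lt hv
    rwa [dist_comm] at this

theorem branch_apply_of_commute {f : V → V} (hd : ∀ v, T.dist w (f v) = T.dist w v)
    (hf : Function.Commute f (T.parent w)) (v : V) : T.branch w (f v) = f (T.branch w v) := by
  rw [branch, branch, hd, (hf.iterate_right _).eq]

def autSubgroup (T : SimpleGraph V) : Subgroup (Equiv.Perm V) where
  carrier := {σ | ∀ a b, T.Adj (σ a) (σ b) ↔ T.Adj a b}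
  mul_mem' hσ hτ a b := (hσ _ _).trans (hτ a b)
  one_mem' _ _ := Iff.rfl
  inv_mem' {σ} hσ a b := by simpa using (hσ (σ⁻¹ a) (σ⁻¹ b)).symm

theorem edist_apply_le_of_mem_autSubgroup (hσ : σ ∈ T.autSubgroup) (a b : V) :
    T.edist (σ a) (σ b) ≤ T.edist a b :=
  le_iInf fun q => iInf_le_of_le (q.map ⟨σ, (hσ _ _).2⟩) (by simp)

theorem dist_apply_of_mem_autSubgroup (hσ : σ ∈ T.autSubgroup) (a b : V) :
    T.dist (σ a) (σ b) = T.dist a b := by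
  refine congrArg ENat.toNat (le_antisymm (edist_apply_le_of_mem_autSubgroup hσ a b) ?_)
  simpa using edist_apply_le_of_mem_autSubgroup (inv_mem hσ) (σ a) (σ b)

theorem autPlus_le_autSubgroup : AutPlus T ≤ T.autSubgroup :=
  (Subgroup.closure_le _).2 fun _ hσ => hσ.1

theorem mem_autPlus_of_fixes_adj (hσ : σ ∈ T.autSubgroup) (huv : T.Adj u v) (hu : σ u = u)
    (hv : σ v = v) : σ ∈ AutPlus T :=
  Subgroup.subset_closure ⟨hσ, u, v, huv, hu, hv⟩

section NeighborEquiv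

variable (hreg : ∀ u v : V, Nonempty (T.neighborSet u ≃ T.neighborSet v))

open Classical in
noncomputable def markedNeighborEquiv (a p b q : V) : T.neighborSet a ≃ T.neighborSet b :=
  if h : T.Adj a p ∧ T.Adj b q then
    (hreg a b).some.trans (Equiv.swap ((hreg a b).some ⟨p, h.1⟩) ⟨q, h.2⟩)
  else (hreg a b).some

theorem markedNeighborEquiv_apply (hp : T.Adj a p) (hq : T.Adj b q) :
    (markedNeighborEquiv hreg a p b q ⟨p, hp⟩ : V) = q := by
  simp [markedNeighborEquiv, hp, hq]

open Classical in
/-- A choice of bijections `N(a) ≃ N(b)` sending `p` to `q` that is compatible with inversion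
(`symmNeighborEquiv_symm`); this is what makes `branchSwap` an involution. -/
noncomputable def symmNeighborEquiv (a p b q : V) : T.neighborSet a ≃ T.neighborSet b :=
  if WellOrderingRel (a, p) (b, q) then markedNeighborEquiv hreg a p b q
  else (markedNeighborEquiv hreg b q a p).symm

theorem symmNeighborEquiv_apply (hp : T.Adj a p) (hq : T.Adj b q) :
    (symmNeighborEquiv hreg a p b q ⟨p, hp⟩ : V) = q := by
  rw [symmNeighborEquiv]
  split_ifs
  · exact markedNeighborEquiv_apply hreg hp hq
  · have : markedNeighborEquiv hreg b q a p ⟨q, hq⟩ = ⟨p, hp⟩ :=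
      Subtype.ext (markedNeighborEquiv_apply hreg hq hp)
    rw [← this, Equiv.symm_apply_apply]

theorem symmNeighborEquiv_symm (h : (a, p) ≠ (b, q)) :
    symmNeighborEquiv hreg b q a p = (symmNeighborEquiv hreg a p b q).symm := by
  have hwo := IsWellFounded.wf (r := WellOrderingRel (α := V × V))
  rcases trichotomous_of WellOrderingRel (a, p) (b, q) with h' | h' | h'
  · rw [symmNeighborEquiv, symmNeighborEquiv, if_pos h', if_neg (hwo.asymmetric _ _ h')]
  · exact absurd h' h
  · rw [symmNeighborEquiv, symmNeighborEquiv, if_pos h', if_neg (hwo.asymmetric _ _ h'),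
      Equiv.symm_symm]

open Classical in
/-- Exchanges the branches at `w` through `u` and `x`, outwards from `w`: the neighbours of
`a = parent v` go bijectively to those of the image of `a`, the parent of `a` going to the
image of that parent. -/
noncomputable def branchSwap (hT : T.IsTree) (w u x v : V) : V :=
  if hv : T.dist w v ≤ 1 then Equiv.swap u x v
  else if T.branch w v = u ∨ T.branch w v = x then
    (symmNeighborEquiv hreg (T.parent w v) (T.parent w (T.parent w v))
      (branchSwap hT w u x (T.parent w v)) (branchSwap hT w u x (T.parent w (T.parent w v)))
      ⟨v, (hT.connected.adj_parent (v := v) (w := w) (by rintro rfl; simp at hv)).symm⟩ : V)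
  else v
termination_by T.dist w v
decreasing_by all_goals simp only [hT.connected.dist_parent]; omega

end NeighborEquiv

section BranchSwap

open Classical

variable {hreg : ∀ u v : V, Nonempty (T.neighborSet u ≃ T.neighborSet v)} {hT : T.IsTree}

local notation "𝔰" => branchSwap hreg hT w u x

theorem branchSwap_of_dist_le_one (h : T.dist w v ≤ 1) :
    𝔰 v = Equiv.swap u x v := by
  rw [branchSwap, dif_pos h]

theorem branchSwap_of_one_lt_dist (h : 1 < T.dist w v)
    (hb : T.branch w v = u ∨ T.branch w v = x) {a p : V} (ha : T.parent w v = a)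
    (hp : T.parent w a = p) (hav : T.Adj a v) :
    𝔰 v = symmNeighborEquiv hreg a p (𝔰 a) (𝔰 p) ⟨v, hav⟩ := by
  subst ha hp
  rw [branchSwap, dif_neg h.not_ge, if_pos hb]

theorem branchSwap_of_branch_ne (hu : T.Adj w u) (hx : T.Adj w x) (hbu : T.branch w v ≠ u)
    (hbx : T.branch w v ≠ x) : 𝔰 v = v := by
  rw [branchSwap]
  split_ifs with h hb
  · refine Equiv.swap_apply_of_ne_of_ne ?_ ?_ <;> rintro rfl
    exacts [hbu (branch_of_adj hu), hbx (branch_of_adj hx)]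
  · exact absurd hb (by tauto)
  · rfl

theorem adj_swap_apply (hu : T.Adj w u) (hx : T.Adj w x) (hv : T.Adj w v) :
    T.Adj w (Equiv.swap u x v) := by
  rw [Equiv.swap_apply_def]
  split_ifs
  exacts [hx, hu, hv]

theorem dist_branchSwap_and_parent_of_dist_le_one (hu : T.Adj w u) (hx : T.Adj w x)
    (h1 : T.dist w v ≤ 1) :
    T.dist w (𝔰 v) = T.dist w v ∧ T.parent w (𝔰 v) = 𝔰 (T.parent w v) := by
  rcases eq_or_ne v w with rfl | hv
  · rw [parent_self, branchSwap_of_dist_le_one h1, Equiv.swap_apply_of_ne_of_ne hu.ne hx.ne]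
    simp
  have hwv : T.Adj w v :=
    dist_eq_one_iff_adj.1 (by have := hT.connected.pos_dist_of_ne hv.symm; omega)
  have hws := adj_swap_apply hu hx hwv
  rw [branchSwap_of_dist_le_one h1,
    hT.parent_eq_of_adj hwv.symm (by rw [dist_self, dist_eq_one_iff_adj.2 hwv]),
    hT.parent_eq_of_adj hws.symm (by rw [dist_self, dist_eq_one_iff_adj.2 hws]),
    branchSwap_of_dist_le_one (by simp), Equiv.swap_apply_of_ne_of_ne hu.ne hx.ne,
    dist_eq_one_iff_adj.2 hwv, dist_eq_one_iff_adj.2 hws]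
  exact ⟨rfl, rfl⟩

theorem dist_branchSwap_and_parent (hu : T.Adj w u) (hx : T.Adj w x) (v : V) :
    T.dist w (𝔰 v) = T.dist w v ∧ T.parent w (𝔰 v) = 𝔰 (T.parent w v) := by
  have hc := hT.connected
  induction hn : T.dist w v using Nat.strong_induction_on generalizing v with
  | _ n ih =>
  subst hn
  rcases le_or_gt (T.dist w v) 1 with h1 | h1
  · exact dist_branchSwap_and_parent_of_dist_le_one hu hx h1
  have hv : v ≠ w := by rintro rfl; simp at h1
  by_cases hb : T.branch w v = u ∨ T.branch w v = x
  swap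
  · push Not at hb
    have hbp : T.branch w (T.parent w v) = T.branch w v := hc.branch_parent h1
    rw [branchSwap_of_branch_ne hu hx hb.1 hb.2,
      branchSwap_of_branch_ne hu hx (hbp ▸ hb.1) (hbp ▸ hb.2)]
    exact ⟨rfl, rfl⟩
  set a := T.parent w v
  set p := T.parent w a
  -- `𝔰 v` is a neighbour of `𝔰 a` other than `𝔰 p`, which is the parent of `𝔰 a` by induction;
  -- in a tree this forces `𝔰 a` to be the parent of `𝔰 v`.
  have hda : T.dist w a + 1 = T.dist w v := hc.dist_parent_add_one hv
  have ha : a ≠ w := by rintro h; rw [h] at hda; simp at hda; omega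
  obtain ⟨hsa, hpsa⟩ := ih (T.dist w a) (by omega) a rfl
  have hsaw : 𝔰 a ≠ w := by rintro h; rw [h] at hsa; simp at hsa; omega
  have hap : T.Adj a p := hc.adj_parent ha
  have hsap : T.Adj (𝔰 a) (𝔰 p) := hpsa ▸ hc.adj_parent hsaw
  have hav : T.Adj a v := (hc.adj_parent hv).symm
  have hsv := branchSwap_of_one_lt_dist (hreg := hreg) (hT := hT) h1 hb rfl rfl hav
  have hsvp : 𝔰 v ≠ T.parent w (𝔰 a) := by
    rw [hpsa, hsv]
    intro h
    have hvp : v = p := congrArg Subtype.val <| Equiv.injective _ <|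
      Subtype.ext (h.trans (symmNeighborEquiv_apply hreg hap hsap).symm)
    have : T.dist w p + 1 = T.dist w a := hc.dist_parent_add_one ha
    rw [← hvp] at this
    omega
  have hadj : T.Adj (𝔰 a) (𝔰 v) := by rw [hsv]; exact Subtype.property _
  obtain ⟨h₁, h₂⟩ := hT.parent_eq_of_adj_of_ne_parent hadj hsvp
  exact ⟨by omega, h₁⟩

theorem branch_branchSwap (hu : T.Adj w u) (hx : T.Adj w x) (v : V) :
    T.branch w (𝔰 v) = Equiv.swap u x (T.branch w v) := by
  have hd := dist_branchSwap_and_parent (hreg := hreg) (hT := hT) hu hx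
  rw [branch_apply_of_commute (fun v => (hd v).1) (fun v => (hd v).2.symm),
    branchSwap_of_dist_le_one hT.connected.dist_branch_le_one]

theorem branchSwap_branchSwap (hu : T.Adj w u) (hx : T.Adj w x) (hux : u ≠ x) (v : V) :
    𝔰 (𝔰 v) = v := by
  have hc := hT.connected
  have hd := dist_branchSwap_and_parent (hreg := hreg) (hT := hT) hu hx
  induction hn : T.dist w v using Nat.strong_induction_on generalizing v with
  | _ n ih =>
  subst hn
  rcases le_or_gt (T.dist w v) 1 with h1 | h1
  · rw [branchSwap_of_dist_le_one ((hd v).1.trans_le h1), branchSwap_of_dist_le_one h1,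
      Equiv.swap_apply_self]
  have hv : v ≠ w := by rintro rfl; simp at h1
  by_cases hb : T.branch w v = u ∨ T.branch w v = x
  swap
  · push Not at hb
    rw [branchSwap_of_branch_ne hu hx hb.1 hb.2, branchSwap_of_branch_ne hu hx hb.1 hb.2]
  set a := T.parent w v
  set p := T.parent w a
  have hda : T.dist w a + 1 = T.dist w v := hc.dist_parent_add_one hv
  have ha : a ≠ w := by rintro h; rw [h] at hda; simp at hda; omega
  have hdp : T.dist w p + 1 = T.dist w a := hc.dist_parent_add_one ha
  have hav : T.Adj a v := (hc.adj_parent hv).symm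
  have hsv := branchSwap_of_one_lt_dist (hreg := hreg) (hT := hT) h1 hb rfl rfl hav
  have hsb : T.branch w (𝔰 v) = u ∨ T.branch w (𝔰 v) = x := by
    rw [branch_branchSwap hu hx]
    rcases hb with h | h <;> rw [h] <;> simp
  have hadj : T.Adj (𝔰 a) (𝔰 v) := hsv ▸ Subtype.property _
  have hssa : 𝔰 a ≠ a := by
    intro h
    have := branch_branchSwap (hreg := hreg) (hT := hT) hu hx a
    rw [h, hc.branch_parent h1] at this
    rcases hb with hb | hb <;> rw [hb] at this <;> simp [hux, hux.symm] at this
  rw [branchSwap_of_one_lt_dist ((hd v).1 ▸ h1) hsb (hd v).2 (hd a).2 hadj,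
    ih _ (by omega) a rfl, ih _ (by omega) p rfl,
    symmNeighborEquiv_symm hreg (a := a) (p := p) (b := 𝔰 a) (q := 𝔰 p)
      (fun h => hssa (congrArg Prod.fst h).symm)]
  rw [show (⟨𝔰 v, hadj⟩ : T.neighborSet (𝔰 a)) = _ from Subtype.ext hsv, Equiv.symm_apply_apply]

theorem branchSwap_adj (hu : T.Adj w u) (hx : T.Adj w x) (hab : T.Adj a b) :
    T.Adj (𝔰 a) (𝔰 b) := by
  have hc := hT.connected
  have hd := dist_branchSwap_and_parent (hreg := hreg) (hT := hT) hu hx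
  wlog h : T.parent w a = b generalizing a b
  · exact (this hab.symm ((hT.parent_eq_or_parent_eq_of_adj hab).resolve_left h)).symm
  have ha : a ≠ w := by rintro rfl; exact hab.ne (by simpa using h)
  have hsa : 𝔰 a ≠ w := by
    intro h'
    have := (hd a).1
    rw [h', dist_self, eq_comm, hc.dist_eq_zero_iff] at this
    exact ha this.symm
  rw [← h, ← (hd a).2]
  exact hc.adj_parent hsa

theorem IsTree.exists_branchSwap_mem_autPlus (hT : T.IsTree)
    (hreg : ∀ u v : V, Nonempty (T.neighborSet u ≃ T.neighborSet v))
    (hu : T.Adj w u) (hx : T.Adj w x) (hux : u ≠ x) (hy : T.Adj w y) (hyu : y ≠ u)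
    (hyx : y ≠ x) :
    ∃ c ∈ AutPlus T, c w = w ∧ Function.Involutive c ∧
      ∀ v, T.branch w (c v) = Equiv.swap u x (T.branch w v) := by
  have hinv : Function.Involutive (branchSwap hreg hT w u x) :=
    branchSwap_branchSwap hu hx hux
  have hfix : ∀ v, T.branch w v ≠ u → T.branch w v ≠ x → branchSwap hreg hT w u x v = v :=
    fun v => branchSwap_of_branch_ne hu hx
  have hw : branchSwap hreg hT w u x w = w := hfix w (by simpa using hu.ne) (by simpa using hx.ne)
  refine ⟨hinv.toPerm, mem_autPlus_of_fixes_adj ?_ hy hw ?_, hw, hinv,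
    branch_branchSwap hu hx⟩
  · have hadj : ∀ {a b}, T.Adj a b →
        T.Adj (branchSwap hreg hT w u x a) (branchSwap hreg hT w u x b) := branchSwap_adj hu hx
    refine fun a b => ⟨fun h => ?_, hadj⟩
    simpa only [Function.Involutive.coe_toPerm, hinv a, hinv b] using hadj h
  · exact hfix y (by rwa [branch_of_adj hy]) (by rwa [branch_of_adj hy])

end BranchSwap

theorem IsTree.adj_iff_of_branch_eq_of_branch_ne (hT : T.IsTree) (hwu : T.Adj w u)
    {a b : V} (ha : T.branch w a = u) (hb : T.branch w b ≠ u) : T.Adj a b ↔ a = u ∧ b = w := by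
  refine ⟨fun hab => ?_, by rintro ⟨rfl, rfl⟩; exact hwu.symm⟩
  by_cases hbw : b = w
  · subst hbw
    exact ⟨by rw [← ha, branch_of_adj hab.symm], rfl⟩
  · have haw : a ≠ w := by rintro rfl; exact hwu.ne (by simpa using ha)
    exact absurd ((hT.branch_eq_of_adj hab haw hbw).symm.trans ha) hb

theorem IsTree.branch_eq_or_branch_eq (hT : T.IsTree) (hwu : T.Adj w u) (v : V) :
    T.branch w v = u ∨ T.branch u v = w := by
  rw [← hT.dist_lt_dist_iff_branch_eq hwu, ← hT.dist_lt_dist_iff_branch_eq hwu.symm]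
  have := hT.dist_ne_of_adj v hwu
  rw [dist_comm, dist_comm (u := v)] at this
  omega

theorem ofSubtype_subtypePerm_mem_autSubgroup {σ : Equiv.Perm V} {p : V → Prop}
    [DecidablePred p] (hσ : σ ∈ T.autSubgroup) (hp : ∀ v, p (σ v) ↔ p v)
    (hcross : ∀ a b, p a → ¬ p b → (T.Adj (σ a) b ↔ T.Adj a b)) :
    Equiv.Perm.ofSubtype (σ.subtypePerm hp) ∈ T.autSubgroup := by
  intro a b
  by_cases ha : p a <;> by_cases hb : p b <;>
    simp only [Equiv.Perm.ofSubtype_subtypePerm_of_mem, Equiv.Perm.ofSubtype_subtypePerm_of_not_mem,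
      ha, hb, not_false_eq_true]
  · exact hσ a b
  · exact hcross a b ha hb
  · rw [adj_comm, hcross b a hb ha, adj_comm]

theorem IsTree.exists_restrict_branch (hT : T.IsTree) {σ : Equiv.Perm V}
    (hσ : σ ∈ T.autSubgroup) (hwu : T.Adj w u) (hw : σ w = w) (hu : σ u = u) :
    ∃ τ ∈ T.autSubgroup, (∀ v, T.branch w v = u → τ v = σ v) ∧
      ∀ v, T.branch w v ≠ u → τ v = v := by
  classical
  have hp : ∀ v, T.branch w (σ v) = u ↔ T.branch w v = u := by
    intro v
    have hdu := dist_apply_of_mem_autSubgroup hσ u v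
    have hdw := dist_apply_of_mem_autSubgroup hσ w v
    rw [hu] at hdu
    rw [hw] at hdw
    rw [← hT.dist_lt_dist_iff_branch_eq hwu, ← hT.dist_lt_dist_iff_branch_eq hwu, hdu, hdw]
  refine ⟨Equiv.Perm.ofSubtype (σ.subtypePerm hp), ofSubtype_subtypePerm_mem_autSubgroup hσ hp ?_,
    fun v hv => Equiv.Perm.ofSubtype_subtypePerm_of_mem hp hv,
    fun v hv => Equiv.Perm.ofSubtype_subtypePerm_of_not_mem hp hv⟩
  intro a b ha hb
  rw [hT.adj_iff_of_branch_eq_of_branch_ne hwu ((hp a).2 ha) hb,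
    hT.adj_iff_of_branch_eq_of_branch_ne hwu ha hb, σ.injective.eq_iff' hu]

theorem exists_adj_notMem (hw : ¬ (T.neighborSet w).Countable) {C : Set V}
    (hC : C.Countable) : ∃ y, T.Adj w y ∧ y ∉ C := by
  by_contra! h
  exact hw (hC.mono h)

theorem IsTree.mem_of_supported_on_branch (hT : T.IsTree)
    (hreg : ∀ u v : V, Nonempty (T.neighborSet u ≃ T.neighborSet v))
    (huncount : ∀ v : V, ¬ (T.neighborSet v).Countable) {S : Set V} (hS : S.Countable)
    {N : Subgroup (AutPlus T)} [N.Normal] (hN : fixingSubgroup (AutPlus T) S ≤ N)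
    (hwu : T.Adj w u) {σ : AutPlus T} (hσ : ∀ v, T.branch w v ≠ u → (σ : Equiv.Perm V) v = v) :
    σ ∈ N := by
  classical
  -- conjugate `σ` into a branch at `w` that `S` does not meet
  obtain ⟨x, hx, hxS⟩ := exists_adj_notMem (huncount w) ((hS.image (T.branch w)).insert u)
  obtain ⟨y, hy, hyux⟩ := exists_adj_notMem (huncount w) ((Set.countable_singleton x).insert u)
  simp only [Set.mem_insert_iff, Set.mem_image, Set.mem_singleton_iff, not_or, not_exists,
    not_and] at hxS hyux
  obtain ⟨c, hc, -, hinv, hbr⟩ :=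
    hT.exists_branchSwap_mem_autPlus hreg hwu hx (Ne.symm hxS.1) hy hyux.1 hyux.2
  have hconj : ⟨c, hc⟩ * σ * ⟨c, hc⟩⁻¹ ∈ N := by
    refine hN ((mem_fixingSubgroup_iff _).2 fun s hs => ?_)
    have hcs : T.branch w (c s) ≠ u := by
      rw [hbr, Ne, Equiv.swap_apply_eq_iff, Equiv.swap_apply_left]
      exact hxS.2 s hs
    simp only [Subgroup.smul_def, Equiv.Perm.smul_def, Subgroup.coe_mul, Subgroup.coe_inv,
      Equiv.Perm.mul_apply, Equiv.Perm.inv_eq_iff_eq.2 (hinv s).symm, hσ _ hcs, hinv s]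
  simpa [mul_assoc] using Subgroup.Normal.conj_mem inferInstance _ hconj (⟨c, hc⟩⁻¹)

theorem IsTree.mem_of_fixes_adj (hT : T.IsTree)
    (hreg : ∀ u v : V, Nonempty (T.neighborSet u ≃ T.neighborSet v))
    (huncount : ∀ v : V, ¬ (T.neighborSet v).Countable) {S : Set V} (hS : S.Countable)
    {N : Subgroup (AutPlus T)} [N.Normal] (hN : fixingSubgroup (AutPlus T) S ≤ N)
    {σ : Equiv.Perm V} (hσ : σ ∈ T.autSubgroup) (hwu : T.Adj w u) (hw : σ w = w)
    (hu : σ u = u) : ⟨σ, mem_autPlus_of_fixes_adj hσ hwu hw hu⟩ ∈ N := by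
  -- `σ` is the product of its restrictions to the two half-trees cut out by the edge `wu`
  obtain ⟨τ, hτ, hτu, hτw⟩ := hT.exists_restrict_branch hσ hwu hw hu
  have hτ' : τ ∈ AutPlus T := mem_autPlus_of_fixes_adj hτ hwu (hτw w (by simpa using hwu.ne))
    (by rw [hτu u (branch_of_adj hwu), hu])
  have hρ : τ⁻¹ * σ ∈ AutPlus T :=
    mul_mem (inv_mem hτ') (mem_autPlus_of_fixes_adj hσ hwu hw hu)
  have h₁ : (⟨τ, hτ'⟩ : AutPlus T) ∈ N :=
    hT.mem_of_supported_on_branch hreg huncount hS hN hwu hτw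
  have h₂ : (⟨τ⁻¹ * σ, hρ⟩ : AutPlus T) ∈ N := by
    refine hT.mem_of_supported_on_branch hreg huncount hS hN hwu.symm fun v hv => ?_
    have hv' := (hT.branch_eq_or_branch_eq hwu v).resolve_right hv
    rw [Equiv.Perm.mul_apply, Equiv.Perm.inv_eq_iff_eq, hτu v hv']
  convert mul_mem h₁ h₂
  ext v
  simp

theorem IsTree.eq_top_of_fixingSubgroup_le (hT : T.IsTree)
    (hreg : ∀ u v : V, Nonempty (T.neighborSet u ≃ T.neighborSet v))
    (huncount : ∀ v : V, ¬ (T.neighborSet v).Countable) {S : Set V} (hS : S.Countable)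
    (N : Subgroup (AutPlus T)) [N.Normal] (hN : fixingSubgroup (AutPlus T) S ≤ N) : N = ⊤ := by
  have : AutPlus T ≤ N.map (AutPlus T).subtype :=
    (Subgroup.closure_le _).2 fun _ ⟨hσ, _, _, hwu, hw, hu⟩ =>
      ⟨_, hT.mem_of_fixes_adj hreg huncount hS hN hσ hwu hw hu, rfl⟩
  refine eq_top_iff.2 fun g _ => ?_
  obtain ⟨n, hn, hng⟩ := this g.2
  rwa [Subtype.ext hng] at hn

theorem IsTree.exists_dist_eq (hT : T.IsTree) (hdeg : ∀ v, (T.neighborSet v).Nontrivial)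
    (v : V) (n : ℕ) : ∃ r, T.dist v r = n := by
  induction n with
  | zero => exact ⟨v, dist_self⟩
  | succ n ih =>
    obtain ⟨r, hr⟩ := ih
    obtain ⟨y, hy, hyp⟩ := (hdeg r).exists_ne (T.parent v r)
    exact ⟨y, hr ▸ (hT.parent_eq_of_adj_of_ne_parent hy hyp).2⟩

theorem IsTree.exists_mem_autPlus_lt_dist (hT : T.IsTree)
    (hreg : ∀ u v : V, Nonempty (T.neighborSet u ≃ T.neighborSet v))
    (huncount : ∀ v : V, ¬ (T.neighborSet v).Countable) (v : V) (n : ℕ) :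
    ∃ g ∈ AutPlus T, n < T.dist v (g v) := by
  classical
  obtain ⟨r, hr⟩ := hT.exists_dist_eq
    (fun v => Set.not_subsingleton_iff.1 fun h => huncount v h.finite.countable) v (n + 1)
  have hvr : v ≠ r := by rintro rfl; simp at hr
  obtain ⟨u, hu_def⟩ : ∃ u, T.branch r v = u := ⟨_, rfl⟩
  have hu : T.Adj r u := hu_def ▸ hT.connected.adj_branch hvr
  obtain ⟨x, hx, hxu⟩ := exists_adj_notMem (huncount r) (Set.countable_singleton u)
  obtain ⟨y, hy, hyux⟩ := exists_adj_notMem (huncount r) ((Set.countable_singleton x).insert u)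
  simp only [Set.mem_insert_iff, Set.mem_singleton_iff, not_or] at hxu hyux
  obtain ⟨c, hc, hcr, -, hbr⟩ :=
    hT.exists_branchSwap_mem_autPlus hreg hu hx (Ne.symm hxu) hy hyux.1 hyux.2
  refine ⟨c, hc, ?_⟩
  -- `v` and `c v` lie at distance `n + 1` from `r`, in different branches at `r`
  have hne : T.branch r v ≠ T.branch r (c v) := by
    rw [hbr, hu_def, Equiv.swap_apply_left]
    exact Ne.symm hxu
  have hcv : T.dist r (c v) = T.dist r v := by
    simpa [hcr] using dist_apply_of_mem_autSubgroup (autPlus_le_autSubgroup hc) r v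
  have := hT.dist_add_dist_le_of_branch_ne hne
  rw [dist_comm] at hcv
  omega

end SimpleGraph

theorem autPlus_tree_no_metrizable_quotient_but_unbounded_orbits_general
    {V : Type*} (T : SimpleGraph V) (hT : T.IsTree)
    (hreg : ∀ u v : V, Nonempty (T.neighborSet u ≃ T.neighborSet v))
    (huncount : ∀ v : V, ¬ (T.neighborSet v).Countable)
    (H : Type*) [Group H] [TopologicalSpace H]
    [TopologicalSpace.MetrizableSpace H] :
    letI : TopologicalSpace (Equiv.Perm V) :=
      TopologicalSpace.induced (fun σ : Equiv.Perm V => (σ : V → V))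
        (@Pi.topologicalSpace V (fun _ => V) (fun _ => ⊥))
    (∀ φ : AutPlus T →* H, Continuous φ → ∀ g, φ g = 1) ∧
    (∀ v : V, ∀ n : ℕ, ∃ g ∈ AutPlus T, n < T.dist v (g v)) := by
  refine ⟨fun φ hφ g => ?_, hT.exists_mem_autPlus_lt_dist hreg huncount⟩
  let : TopologicalSpace V := ⊥
  let : TopologicalSpace (Equiv.Perm V) := TopologicalSpace.induced (⇑) Pi.topologicalSpace
  have hinduced : IsInducing fun g : AutPlus T => ⇑(g : Equiv.Perm V) :=
    (IsInducing.induced _).comp IsInducing.subtypeVal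
  obtain ⟨S, hS, hφS⟩ := hinduced.exists_countable_eqOn_imp_eq hφ.continuousAt (x₀ := 1)
  have hker : φ.ker = ⊤ := hT.eq_top_of_fixingSubgroup_le hreg huncount hS φ.ker fun h hh => by
    simpa using hφS h fun s hs => (mem_fixingSubgroup_iff _).1 hh s hs
  exact φ.mem_ker.1 (hker ▸ Subgroup.mem_top g)

/-- Let `T` be a regular tree in which every vertex has uncountably many
neighbours, and `G = Aut⁺(T)` with the topology of pointwise convergence on
vertices. Then every continuous homomorphism from `G` to a metrisable
topological group is trivial, while `G` has unbounded orbits on the vertex set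
with its path metric. -/
theorem autPlus_tree_no_metrizable_quotient_but_unbounded_orbits
    {V : Type*} (T : SimpleGraph V) (hT : T.IsTree)
    (hreg : ∀ u v : V, Nonempty (T.neighborSet u ≃ T.neighborSet v))
    (huncount : ∀ v : V, ¬ (T.neighborSet v).Countable)
    (H : Type*) [Group H] [TopologicalSpace H] [IsTopologicalGroup H]
    [TopologicalSpace.MetrizableSpace H] :
    letI : TopologicalSpace (Equiv.Perm V) :=
      TopologicalSpace.induced (fun σ : Equiv.Perm V => (σ : V → V))
        (@Pi.topologicalSpace V (fun _ => V) (fun _ => ⊥))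
    (∀ φ : AutPlus T →* H, Continuous φ → ∀ g, φ g = 1) ∧
    (∀ v : V, ∀ n : ℕ, ∃ g ∈ AutPlus T, n < T.dist v (g v)) :=
  autPlus_tree_no_metrizable_quotient_but_unbounded_orbits_general T hT hreg huncount H
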